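/- arXiv:1603.01883 — 6 statements merged into one kernel-verified Lean document; each statement's English description precedes it below -/
import Mathlib

section
/- Let G be a finitely generated, infinite group that is not torsion-free (i.e., G contains a nonidentity element of finite order). Then G has a connected Cayley graph of finite valency that is not normal: there exist a finite symmetric generating set T of G and an automorphism of Cay(G;T) that is not an affine bijection. -/
/-!
Let `a ≠ 1` have finite order, `H = ⟨a⟩`, and `S` a finite generating set. Take
`T = H (S ∪ S⁻¹ ∪ {1}) H \ {1}`. Since `T ∪ {1}` is invariant under left multiplication by `H`,
a vertex `w` of `Cay(G;T)` outside `{u, v} ⊆ H` is adjacent to `u` iff `w ∈ T ∪ {1}` iff it is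
adjacent to `v`; so the transposition of `1` and `a` is a graph automorphism. It is not affine:
an affine map `x ↦ h α(x)` fixing `x`, `y` and `xy` (which exist when only finitely many points
move in an infinite group) satisfies `xy = h α(x) α(y) = x h⁻¹ y`, so `h = 1`, whereas
the transposition sends `1` to `a`.
-/

def cayleyGraph {G : Type*} [Group G] (S : Set G)
    (hsymm : ∀ s ∈ S, s⁻¹ ∈ S) (hid : (1 : G) ∉ S) : SimpleGraph G where
  Adj g h := g⁻¹ * h ∈ S
  symm := by
    constructor
    intro g h hgh
    have h2 := hsymm _ hgh
    simpa [mul_inv_rev] using h2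
  loopless := by
    constructor
    intro g hg
    simp only [inv_mul_cancel] at hg
    exact hid hg

open Pointwise

namespace SimpleGraph

variable {V : Type*} [DecidableEq V] (Γ : SimpleGraph V)

theorem adj_swap_iff_of_twins {u v : V} (huv : ∀ w, w ≠ u → w ≠ v → (Γ.Adj u w ↔ Γ.Adj v w))
    (x y : V) : Γ.Adj (Equiv.swap u v x) (Equiv.swap u v y) ↔ Γ.Adj x y := by
  have swap_left : ∀ x y, y ≠ u → y ≠ v → (Γ.Adj (Equiv.swap u v x) y ↔ Γ.Adj x y) := by
    intro x y hyu hyv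
    rcases eq_or_ne x u with rfl | hxu
    · simpa using (huv y hyu hyv).symm
    rcases eq_or_ne x v with rfl | hxv
    · simpa using huv y hyu hyv
    · rw [Equiv.swap_apply_of_ne_of_ne hxu hxv]
  by_cases hy : y ≠ u ∧ y ≠ v
  · rw [Equiv.swap_apply_of_ne_of_ne hy.1 hy.2, swap_left x y hy.1 hy.2]
  by_cases hx : x ≠ u ∧ x ≠ v
  · rw [Equiv.swap_apply_of_ne_of_ne hx.1 hx.2, adj_comm, swap_left y x hx.1 hx.2, adj_comm]
  rw [not_and_or, not_ne_iff, not_ne_iff] at hx hy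
  rcases hx with rfl | rfl <;> rcases hy with rfl | rfl <;> simp [adj_comm]

def Iso.swap {u v : V} (huv : ∀ w, w ≠ u → w ≠ v → (Γ.Adj u w ↔ Γ.Adj v w)) : Γ ≃g Γ where
  toEquiv := Equiv.swap u v
  map_rel_iff' := Γ.adj_swap_iff_of_twins huv _ _

end SimpleGraph

theorem Set.Finite.exists_mul_notMem {G : Type*} [Group G] [Infinite G] {M : Set G}
    (hM : M.Finite) : ∃ x y, x ∉ M ∧ y ∉ M ∧ x * y ∉ M := by
  obtain ⟨x, hx⟩ := hM.exists_notMem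
  obtain ⟨y, hy⟩ := (hM.union (hM.smul_set (a := x⁻¹))).exists_notMem
  rw [Set.mem_union, not_or, Set.mem_smul_set_iff_inv_smul_mem, inv_inv, smul_eq_mul] at hy
  exact ⟨x, y, hx, hy⟩

theorem not_exists_affine_of_finite_support {G : Type*} [Group G] [Infinite G] {φ : G → G}
    (hφ : {x | φ x ≠ x}.Finite) (hφ1 : φ 1 ≠ 1) :
    ¬ ∃ (α : G ≃* G) (h : G), ∀ x, φ x = h * α x := by
  rintro ⟨α, h, hα⟩
  obtain ⟨x, y, hx, hy, hxy⟩ := hφ.exists_mul_notMem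
  simp only [Set.notMem_ofPred_iff, not_not] at hx hy hxy
  have h_one : h ≠ 1 := by simpa [hα] using hφ1
  have hαx : α x = h⁻¹ * x := eq_inv_mul_of_mul_eq (hx ▸ hα x).symm
  have hαy : α y = h⁻¹ * y := eq_inv_mul_of_mul_eq (hy ▸ hα y).symm
  have : x * y = x * (h⁻¹ * y) := by
    calc x * y = φ (x * y) := hxy.symm
      _ = h * α (x * y) := hα (x * y)
      _ = x * (h⁻¹ * y) := by rw [map_mul, hαx, hαy]; group
  exact h_one (inv_eq_one.mp (right_eq_mul.mp (mul_left_cancel this)))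

section DoubleCosetGenSet

variable {G : Type*} [Group G]

theorem Subgroup.mul_mem_mul_iff_left {H : Subgroup G} {X : Set G} {h : G} (hh : h ∈ H) (z : G) :
    h * z ∈ (H : Set G) * X ↔ z ∈ (H : Set G) * X := by
  rw [← smul_eq_mul h z, ← Set.mem_inv_smul_set_iff (a := h), ← smul_mul_assoc,
    smul_coe_set (inv_mem hh)]

theorem cayleyGraph_adj_iff_mem_insert_one {T : Set G} (hsymm : ∀ t ∈ T, t⁻¹ ∈ T)
    (hid : (1 : G) ∉ T)
    {H : Subgroup G} (hT : ∀ h ∈ H, ∀ z, h * z ∈ insert 1 T ↔ z ∈ insert 1 T)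
    {u w : G} (hu : u ∈ H) (hwu : w ≠ u) :
    (cayleyGraph T hsymm hid).Adj u w ↔ w ∈ insert 1 T := by
  have hne : u⁻¹ * w ≠ 1 := fun h => hwu (inv_mul_eq_one.mp h).symm
  change u⁻¹ * w ∈ T ↔ _
  rw [← hT u⁻¹ (inv_mem hu), Set.mem_insert_iff, or_iff_right hne]

def doubleCosetGenSet (H : Subgroup G) (S : Set G) : Set G :=
  ((H : Set G) * insert 1 (S ∪ S⁻¹) * H) \ {1}

variable (H : Subgroup G) (S : Set G)

theorem insert_one_doubleCosetGenSet :
    insert 1 (doubleCosetGenSet H S) = (H : Set G) * insert 1 (S ∪ S⁻¹) * H := by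
  exact Set.insert_sdiff_self_of_mem
    ⟨1, ⟨1, H.one_mem, 1, Set.mem_insert _ _, one_mul 1⟩, 1, H.one_mem, one_mul 1⟩

theorem inv_mem_doubleCosetGenSet {t : G} (ht : t ∈ doubleCosetGenSet H S) :
    t⁻¹ ∈ doubleCosetGenSet H S := by
  obtain ⟨⟨x, ⟨h₁, hh₁, s, hs, rfl⟩, h₂, hh₂, rfl⟩, ht1⟩ := ht
  refine ⟨⟨h₂⁻¹ * s⁻¹, ⟨h₂⁻¹, inv_mem hh₂, s⁻¹, ?_, rfl⟩, h₁⁻¹, inv_mem hh₁, by group⟩,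
    inv_ne_one.mpr ht1⟩
  simpa [Set.inv_insert, Set.union_inv, or_comm] using hs

theorem one_notMem_doubleCosetGenSet : (1 : G) ∉ doubleCosetGenSet H S := fun h => h.2 rfl

theorem doubleCosetGenSet_finite [Finite H] (hS : S.Finite) : (doubleCosetGenSet H S).Finite :=
  (((Set.toFinite (H : Set G)).mul ((hS.union hS.inv).insert 1)).mul (Set.toFinite _)).sdiff

theorem closure_doubleCosetGenSet (hS : Subgroup.closure S = ⊤) :
    Subgroup.closure (doubleCosetGenSet H S) = ⊤ := by
  rw [← Subgroup.closure_insert_one, insert_one_doubleCosetGenSet, eq_top_iff, ← hS]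
  exact Subgroup.closure_mono fun s hs =>
    ⟨s, ⟨1, H.one_mem, s, Or.inr (Or.inl hs), one_mul s⟩, 1, H.one_mem, mul_one s⟩

theorem doubleCosetGenSet_twins {u v : G} (hu : u ∈ H) (hv : v ∈ H) (w : G) (hwu : w ≠ u)
    (hwv : w ≠ v) :
    (cayleyGraph _ (fun _ => inv_mem_doubleCosetGenSet H S)
      (one_notMem_doubleCosetGenSet H S)).Adj u w ↔
    (cayleyGraph _ (fun _ => inv_mem_doubleCosetGenSet H S)
      (one_notMem_doubleCosetGenSet H S)).Adj v w := by
  have hT : ∀ h ∈ H, ∀ z,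
      h * z ∈ insert 1 (doubleCosetGenSet H S) ↔ z ∈ insert 1 (doubleCosetGenSet H S) := by
    simp only [insert_one_doubleCosetGenSet, mul_assoc]
    exact fun h hh z => Subgroup.mul_mem_mul_iff_left hh z
  rw [cayleyGraph_adj_iff_mem_insert_one _ _ hT hu hwu,
    cayleyGraph_adj_iff_mem_insert_one _ _ hT hv hwv]

end DoubleCosetGenSet

/-- **Proposition 1.6.** If `G` is a finitely generated infinite group that is
not torsion-free, then `G` has a connected Cayley graph of finite valency that
is not normal: there is a finite symmetric generating set `T` and an
automorphism of `Cay(G;T)` that is not an affine bijection. -/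
theorem exists_nonnormal_cayley_of_torsion
    {G : Type*} [Group G] [Group.FG G] [Infinite G]
    (htors : ∃ g : G, g ≠ 1 ∧ IsOfFinOrder g) :
    ∃ (T : Set G) (hsymm : ∀ t ∈ T, t⁻¹ ∈ T) (hid : (1 : G) ∉ T),
      T.Finite ∧ Subgroup.closure T = ⊤ ∧
      ∃ ψ : cayleyGraph T hsymm hid ≃g cayleyGraph T hsymm hid,
        ¬ ∃ (α : G ≃* G) (h : G), ∀ x : G, ψ x = h * α x := by
  classical
  obtain ⟨a, ha1, ha⟩ := htors
  obtain ⟨S, hS⟩ := Group.FG.out (G := G)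
  let H := Subgroup.zpowers a
  have : Finite H := ha.finite_zpowers.to_subtype
  refine ⟨doubleCosetGenSet H S, fun _ => inv_mem_doubleCosetGenSet H S,
    one_notMem_doubleCosetGenSet H S, doubleCosetGenSet_finite H S S.finite_toSet,
    closure_doubleCosetGenSet H S hS,
    SimpleGraph.Iso.swap _ (doubleCosetGenSet_twins H S H.one_mem (Subgroup.mem_zpowers a)), ?_⟩
  refine not_exists_affine_of_finite_support ((Set.toFinite {1, a}).subset fun x hx => ?_) ?_
  · exact (Equiv.swap_apply_ne_self_iff.mp hx).2
  · exact (Equiv.swap_apply_left (1 : G) a).trans_ne ha1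
end

section
/- Let G1 and G2 be torsion-free abelian groups, let Si be a finite, symmetric generating set of Gi for i = 1,2, and let φ be a graph isomorphism from Cay(G1;S1) to Cay(G2;S2). Then φ is an affine bijection: there exist a group isomorphism α : G1 → G2 and h ∈ G2 with φ(x) = h · α(x) for all x ∈ G1. -/
/-- A monoid is torsion-free if its only element of finite order is `1`
(the definition of `Monoid.IsTorsionFree` in the Mathlib this was written for). -/
def Monoid.IsTorsionFree (G : Type*) [Monoid G] : Prop :=
  ∀ g : G, g ≠ 1 → ¬IsOfFinOrder g

/-!
Fix `g ∈ G₁` and consider the displacement `d x = (φ x)⁻¹ * φ (x * g)`. It takes finitely many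
values, because `x` and `x * g` are joined by a path in `Cay(G₁;S₁)` whose labels do not depend
on `x`. It is harmonic, because `φ` carries the `S₁`-neighbours of `x` and of `x * g` onto the
`S₂`-neighbours of `φ x` and `φ (x * g)` and `G₁` is abelian. Composed with a homomorphism
`G₂ → ℤ`, it is then constant by the maximum principle; since such homomorphisms separate the
points of the finitely generated torsion-free group `G₂`, `d` itself is constant, which says that
`x ↦ (φ 1)⁻¹ * φ x` is a homomorphism.
-/

open Finset

theorem exists_monoidHom_ne_one {H : Type*} [CommGroup H] [Group.FG H] [IsMulTorsionFree H]
    {y : H} (hy : y ≠ 1) : ∃ f : H →* Multiplicative ℤ, f y ≠ 1 := by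
  have : Module.Finite ℤ (Additive H) := Module.Finite.iff_addGroup_fg.2 inferInstance
  obtain ⟨f, hf⟩ := Module.Projective.exists_dual_ne_zero ℤ (x := Additive.ofMul y) hy
  exact ⟨AddMonoidHom.toMultiplicativeRight f.toAddMonoidHom, hf⟩

def IsMulHarmonic {G R : Type*} [Group G] [CommMonoid R] (S : Finset G) (F : G → R) : Prop :=
  ∀ x, ∏ s ∈ S, F (x * s) = F x ^ #S

namespace IsMulHarmonic

variable {G : Type*} [Group G] {S : Finset G}

/-- Maximum principle: the maximum is attained, and the set where it is attained is closed under
the steps `S`. -/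
theorem apply_eq_apply {R : Type*} [CommGroup R] [LinearOrder R] [IsOrderedMonoid R]
    {F : G → R} (hF : IsMulHarmonic S F) (hfin : (Set.range F).Finite)
    (hsymm : ∀ s ∈ S, s⁻¹ ∈ S) (hgen : Subgroup.closure (S : Set G) = ⊤) (x y : G) :
    F x = F y := by
  obtain ⟨_, ⟨x₀, rfl⟩, hmax⟩ := Set.exists_max_image _ id hfin (Set.range_nonempty F)
  have hle (z : G) : F z ≤ F x₀ := hmax _ ⟨z, rfl⟩
  have hstep (z : G) (hz : F z = F x₀) (s : G) (hs : s ∈ S) : F (z * s) = F x₀ := by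
    by_contra hne
    have hlt : ∏ t ∈ S, F (z * t) < ∏ _t ∈ S, F z :=
      prod_lt_prod' (fun t _ => hz ▸ hle _) ⟨s, hs, hz ▸ lt_of_le_of_ne (hle _) hne⟩
    rw [prod_const, hF z] at hlt
    exact lt_irrefl _ hlt
  have hconst (g : G) : F (x₀ * g) = F x₀ := by
    induction (hgen ▸ Subgroup.mem_top g : g ∈ Subgroup.closure (S : Set G))
      using Subgroup.closure_induction_right with
    | one => rw [mul_one]
    | mul_right g _ s hs ih => rw [← mul_assoc]; exact hstep _ ih s hs
    | mul_inv_cancel g _ s hs ih => rw [← mul_assoc]; exact hstep _ ih s⁻¹ (hsymm s hs)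
  rw [← mul_inv_cancel_left x₀ x, ← mul_inv_cancel_left x₀ y, hconst, hconst]

theorem comp {H R : Type*} [CommMonoid H] [CommMonoid R] {d : G → H} (hd : IsMulHarmonic S d)
    (f : H →* R) : IsMulHarmonic S (f ∘ d) := fun x => by
  simp only [Function.comp_apply, ← map_prod, ← map_pow, hd x]

theorem apply_eq_apply_of_isMulTorsionFree {H : Type*} [CommGroup H] [Group.FG H]
    [IsMulTorsionFree H] {d : G → H} (hd : IsMulHarmonic S d) (hfin : (Set.range d).Finite)
    (hsymm : ∀ s ∈ S, s⁻¹ ∈ S) (hgen : Subgroup.closure (S : Set G) = ⊤) (x y : G) :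
    d x = d y := by
  by_contra hne
  obtain ⟨f, hf⟩ := exists_monoidHom_ne_one (div_ne_one.2 hne)
  apply hf
  rw [map_div, div_eq_one]
  exact (hd.comp f).apply_eq_apply (Set.range_comp f d ▸ hfin.image f) hsymm hgen x y

end IsMulHarmonic

def displacement {G₁ G₂ : Type*} [Group G₁] [Group G₂] (φ : G₁ → G₂) (g x : G₁) : G₂ :=
  (φ x)⁻¹ * φ (x * g)

section Displacement

variable {G₁ G₂ : Type*} [Group G₁] [Group G₂] (φ : G₁ → G₂)

theorem displacement_one : displacement φ 1 = 1 := by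
  ext x; simp [displacement]

theorem displacement_mul (g h x : G₁) :
    displacement φ (g * h) x = displacement φ g x * displacement φ h (x * g) := by
  simp [displacement, mul_assoc]

theorem displacement_inv (g x : G₁) :
    displacement φ g⁻¹ x = (displacement φ g (x * g⁻¹))⁻¹ := by
  simp [displacement]

theorem finite_range_displacement {S : Set G₁} (hgen : Subgroup.closure S = ⊤)
    (hS : ∀ s ∈ S, (Set.range (displacement φ s)).Finite) (g : G₁) :
    (Set.range (displacement φ g)).Finite := by
  induction (hgen ▸ Subgroup.mem_top g : g ∈ Subgroup.closure S)
    using Subgroup.closure_induction with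
  | mem s hs => exact hS s hs
  | one => simp [displacement_one]
  | mul g h _ _ ihg ihh =>
    refine (ihg.mul ihh).subset ?_
    rintro _ ⟨x, rfl⟩
    exact displacement_mul φ g h x ▸ Set.mul_mem_mul ⟨x, rfl⟩ ⟨x * g, rfl⟩
  | inv g _ ih =>
    refine ih.inv.subset ?_
    rintro _ ⟨x, rfl⟩
    simp [displacement_inv]

end Displacement

theorem displacement_mul_right_comm {G₁ G₂ : Type*} [CommGroup G₁] [CommGroup G₂]
    (φ : G₁ → G₂) (g s x : G₁) :
    displacement φ g (x * s) = displacement φ g x * (displacement φ s x)⁻¹ *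
      displacement φ s (x * g) := by
  simp only [displacement, mul_right_comm x s g]
  apply Additive.ofMul.injective
  simp only [ofMul_mul, ofMul_inv]
  abel

@[simp]
theorem cayleyGraph_adj {G : Type*} [Group G] {S : Set G} {hsymm : ∀ s ∈ S, s⁻¹ ∈ S}
    {hid : (1 : G) ∉ S} {g h : G} : (cayleyGraph S hsymm hid).Adj g h ↔ g⁻¹ * h ∈ S :=
  Iff.rfl

section CayleyGraph

variable {G₁ : Type*} [Group G₁] {S₁ : Set G₁} {hsymm₁ : ∀ s ∈ S₁, s⁻¹ ∈ S₁} {hid₁ : (1 : G₁) ∉ S₁}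

theorem displacement_mem {G₂ : Type*} [Group G₂] {S₂ : Set G₂} {hsymm₂ : ∀ s ∈ S₂, s⁻¹ ∈ S₂}
    {hid₂ : (1 : G₂) ∉ S₂} (φ : cayleyGraph S₁ hsymm₁ hid₁ →g cayleyGraph S₂ hsymm₂ hid₂)
    {s : G₁} (hs : s ∈ S₁) (x : G₁) : displacement φ s x ∈ S₂ :=
  φ.map_adj (by simpa using hs)

/-- The steps from `x` along `S₁` are carried bijectively onto the steps from `φ x` along `S₂`. -/
theorem prod_displacement {G₂ : Type*} [CommGroup G₂] {S₂ : Set G₂}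
    {hsymm₂ : ∀ s ∈ S₂, s⁻¹ ∈ S₂} {hid₂ : (1 : G₂) ∉ S₂}
    (φ : cayleyGraph S₁ hsymm₁ hid₁ ≃g cayleyGraph S₂ hsymm₂ hid₂)
    (hfin₁ : S₁.Finite) (hfin₂ : S₂.Finite) (x : G₁) :
    ∏ s ∈ hfin₁.toFinset, displacement φ s x = ∏ t ∈ hfin₂.toFinset, t := by
  refine prod_nbij' (fun s => displacement φ s x) (fun t => x⁻¹ * φ.symm (φ x * t))
    (fun s hs => ?_) (fun t ht => ?_) (fun s _ => by simp [displacement])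
    (fun t _ => by simp [displacement]) (fun _ _ => rfl)
  · simp only [Set.Finite.mem_toFinset] at hs ⊢
    exact displacement_mem φ.toHom hs x
  · simp only [Set.Finite.mem_toFinset] at ht ⊢
    exact (φ.map_adj_iff (v := x) (w := φ.symm (φ x * t))).1 (by simpa using ht)

end CayleyGraph

theorem isMulHarmonic_displacement {G₁ G₂ : Type*} [CommGroup G₁] [CommGroup G₂]
    {S₁ : Set G₁} {S₂ : Set G₂} {hsymm₁ : ∀ s ∈ S₁, s⁻¹ ∈ S₁} {hsymm₂ : ∀ s ∈ S₂, s⁻¹ ∈ S₂}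
    {hid₁ : (1 : G₁) ∉ S₁} {hid₂ : (1 : G₂) ∉ S₂}
    (φ : cayleyGraph S₁ hsymm₁ hid₁ ≃g cayleyGraph S₂ hsymm₂ hid₂)
    (hfin₁ : S₁.Finite) (hfin₂ : S₂.Finite) (g : G₁) :
    IsMulHarmonic hfin₁.toFinset (displacement φ g) := fun x => by
  simp only [displacement_mul_right_comm φ g, prod_mul_distrib, prod_const, prod_inv_distrib,
    prod_displacement φ hfin₁ hfin₂, inv_mul_cancel_right]

theorem exists_mulEquiv_of_displacement_eq {G₁ G₂ : Type*} [Group G₁] [CommGroup G₂]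
    (e : G₁ ≃ G₂) (h : ∀ g x, displacement e g x = displacement e g 1) :
    ∃ (α : G₁ ≃* G₂) (c : G₂), ∀ x, e x = c * α x := by
  refine ⟨MulEquiv.mk' (e.trans (Equiv.mulLeft (e 1)⁻¹)) fun x y => ?_, e 1,
    fun x => (mul_inv_cancel_left (e 1) (e x)).symm⟩
  have hxy : e (x * y) = e x * ((e 1)⁻¹ * e y) := by
    simpa [displacement, inv_mul_eq_iff_eq_mul] using h y x
  simp only [Equiv.trans_apply, Equiv.coe_mulLeft, hxy, mul_assoc]

theorem cayley_iso_is_affine_abelian_general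
    {G1 G2 : Type*} [CommGroup G1] [CommGroup G2]
    (htf2 : Monoid.IsTorsionFree G2)
    (S1 : Set G1) (S2 : Set G2)
    (hfin1 : S1.Finite) (hfin2 : S2.Finite)
    (hsymm1 : ∀ s ∈ S1, s⁻¹ ∈ S1) (hsymm2 : ∀ s ∈ S2, s⁻¹ ∈ S2)
    (hid1 : (1 : G1) ∉ S1) (hid2 : (1 : G2) ∉ S2)
    (hgen1 : Subgroup.closure S1 = ⊤) (hgen2 : Subgroup.closure S2 = ⊤)
    (φ : cayleyGraph S1 hsymm1 hid1 ≃g cayleyGraph S2 hsymm2 hid2) :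
    ∃ (α : G1 ≃* G2) (h : G2), ∀ x : G1, φ x = h * α x := by
  have : Group.FG G2 := Group.fg_iff.2 ⟨S2, hgen2, hfin2⟩
  have : IsMulTorsionFree G2 := isMulTorsionFree_iff_not_isOfFinOrder.2 htf2
  refine exists_mulEquiv_of_displacement_eq φ.toEquiv fun g x => ?_
  have hrange : (Set.range (displacement φ g)).Finite :=
    finite_range_displacement φ hgen1 (fun s hs =>
      hfin2.subset (Set.range_subset_iff.2 (displacement_mem φ.toHom hs))) g
  exact (isMulHarmonic_displacement φ hfin1 hfin2 g).apply_eq_apply_of_isMulTorsionFree hrange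
    (by simpa using hsymm1) (by simpa using hgen1) x 1

/-- **Proposition 2.1 (Ryabchenko).** If `G₁` and `G₂` are torsion-free abelian
groups and `Sᵢ` is a finite symmetric generating set of `Gᵢ`, then every graph
isomorphism from `Cay(G₁;S₁)` to `Cay(G₂;S₂)` is an affine bijection. -/
theorem cayley_iso_is_affine_abelian
    {G1 G2 : Type*} [CommGroup G1] [CommGroup G2]
    (htf1 : Monoid.IsTorsionFree G1) (htf2 : Monoid.IsTorsionFree G2)
    (S1 : Set G1) (S2 : Set G2)
    (hfin1 : S1.Finite) (hfin2 : S2.Finite)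
    (hsymm1 : ∀ s ∈ S1, s⁻¹ ∈ S1) (hsymm2 : ∀ s ∈ S2, s⁻¹ ∈ S2)
    (hid1 : (1 : G1) ∉ S1) (hid2 : (1 : G2) ∉ S2)
    (hgen1 : Subgroup.closure S1 = ⊤) (hgen2 : Subgroup.closure S2 = ⊤)
    (φ : cayleyGraph S1 hsymm1 hid1 ≃g cayleyGraph S2 hsymm2 hid2) :
    ∃ (α : G1 ≃* G2) (h : G2), ∀ x : G1, φ x = h * α x :=
  cayley_iso_is_affine_abelian_general htf2 S1 S2 hfin1 hfin2 hsymm1 hsymm2 hid1 hid2 hgen1 hgen2 φ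
end

section
/- For i = 1,2, let Si be a finite symmetric generating set of a group Gi, let φ1 and φ2 each be graph isomorphisms from Cay(G1;S1) to Cay(G2;S2) with φ1(e) = e and φ2(e) = e, let gi ∈ Gi, let Si* = { ρ(gi) : ρ ∈ Aut(Cay(Gi;Si)), ρ(e) = e } be the orbit of gi under the stabilizer of the identity in Aut(Cay(Gi;Si)), and let Gi* = ⟨Si*⟩. If φ1(g1) = g2, then φ2 maps G1* bijectively onto G2*, and its restriction is a graph isomorphism from Cay(G1*; S1* ∪ (S1*)⁻¹) to Cay(G2*; S2* ∪ (S2*)⁻¹). -/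
open Set

namespace Subgroup

variable {G H : Type*} [Group G] [Group H] {T : Set G} {U : Set H}

theorem mapsTo_closure_of_forall_inv_mul_mem (f : G → H) (h1 : f 1 = 1)
    (h : ∀ x, ∀ s ∈ T, (f x)⁻¹ * f (x * s) ∈ U) : MapsTo f (closure T) (closure U) := by
  intro x hx
  induction hx using closure_induction_right with
  | one => rw [h1]; exact one_mem _
  | mul_right x _ s hs ih =>
    have hstep : f (x * s) = f x * ((f x)⁻¹ * f (x * s)) := by group
    rw [hstep]
    exact mul_mem ih (subset_closure (h x s hs))
  | mul_inv_cancel x _ s hs ih =>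
    have hs' : (f (x * s⁻¹))⁻¹ * f x ∈ U := by simpa using h (x * s⁻¹) s hs
    have hstep : f (x * s⁻¹) = f x * ((f (x * s⁻¹))⁻¹ * f x)⁻¹ := by group
    rw [hstep]
    exact mul_mem ih (inv_mem (subset_closure hs'))

theorem bijOn_closure_of_inv_mul_mem_iff (e : G ≃ H) (h1 : e 1 = 1)
    (h : ∀ x y, (e x)⁻¹ * e y ∈ U ↔ x⁻¹ * y ∈ T) : BijOn e (closure T) (closure U) := by
  refine e.bijOn' (mapsTo_closure_of_forall_inv_mul_mem e h1 fun x s hs => ?_)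
    (mapsTo_closure_of_forall_inv_mul_mem e.symm (e.symm_apply_eq.2 h1.symm) fun y t ht => ?_)
  · rwa [h, inv_mul_cancel_left]
  · rwa [← h, e.apply_symm_apply, e.apply_symm_apply, inv_mul_cancel_left]

end Subgroup

namespace SimpleGraph

variable {V₁ V₂ : Type*} {Γ₁ : SimpleGraph V₁} {Γ₂ : SimpleGraph V₂}

def stabilizerOrbit {V : Type*} (Γ : SimpleGraph V) (v a : V) : Set V :=
  {x | ∃ ρ : Γ ≃g Γ, ρ v = v ∧ ρ a = x}

theorem Iso.map_mem_stabilizerOrbit (φ ψ : Γ₁ ≃g Γ₂) {v₁ : V₁} {v₂ : V₂} (hφ : φ v₁ = v₂)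
    (hψ : ψ v₁ = v₂) {a x : V₁} (hx : x ∈ Γ₁.stabilizerOrbit v₁ a) :
    ψ x ∈ Γ₂.stabilizerOrbit v₂ (φ a) := by
  obtain ⟨ρ, hρv, rfl⟩ := hx
  refine ⟨(φ.symm.trans ρ).trans ψ, ?_, ?_⟩
  · simp [← hφ, hρv, hψ]
  · simp

theorem Iso.map_mem_stabilizerOrbit_iff (φ ψ : Γ₁ ≃g Γ₂) {v₁ : V₁} {v₂ : V₂}
    (hφ : φ v₁ = v₂) (hψ : ψ v₁ = v₂) {a x : V₁} :
    ψ x ∈ Γ₂.stabilizerOrbit v₂ (φ a) ↔ x ∈ Γ₁.stabilizerOrbit v₁ a := by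
  refine ⟨fun hx => ?_, φ.map_mem_stabilizerOrbit ψ hφ hψ⟩
  simpa using φ.symm.map_mem_stabilizerOrbit ψ.symm (φ.symm_apply_eq.2 hφ.symm)
    (ψ.symm_apply_eq.2 hψ.symm) hx

end SimpleGraph

section Cayley

variable {G₁ G₂ : Type*} [Group G₁] [Group G₂] {S₁ : Set G₁} {S₂ : Set G₂}
  {hsymm₁ : ∀ s ∈ S₁, s⁻¹ ∈ S₁} {hsymm₂ : ∀ s ∈ S₂, s⁻¹ ∈ S₂}
  {hid₁ : (1 : G₁) ∉ S₁} {hid₂ : (1 : G₂) ∉ S₂}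

def cayleyGraph.mulLeft (a : G₁) :
    cayleyGraph S₁ hsymm₁ hid₁ ≃g cayleyGraph S₁ hsymm₁ hid₁ where
  toEquiv := Equiv.mulLeft a
  map_rel_iff' := by simp [cayleyGraph, mul_assoc]

@[simp]
theorem cayleyGraph.mulLeft_apply (a g : G₁) :
    cayleyGraph.mulLeft (hsymm₁ := hsymm₁) (hid₁ := hid₁) a g = a * g :=
  rfl

theorem cayleyGraph.inv_mul_mem_stabilizerOrbit_iff
    (φ φ' : cayleyGraph S₁ hsymm₁ hid₁ ≃g cayleyGraph S₂ hsymm₂ hid₂) (hφ : φ 1 = 1)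
    (a x y : G₁) :
    (φ' x)⁻¹ * φ' y ∈ (cayleyGraph S₂ hsymm₂ hid₂).stabilizerOrbit 1 (φ a) ↔
      x⁻¹ * y ∈ (cayleyGraph S₁ hsymm₁ hid₁).stabilizerOrbit 1 a := by
  let ψ := ((cayleyGraph.mulLeft x).trans φ').trans (cayleyGraph.mulLeft (φ' x)⁻¹)
  have hψ : ψ 1 = 1 := by simp [ψ]
  have hψxy : ψ (x⁻¹ * y) = (φ' x)⁻¹ * φ' y := by simp [ψ]
  rw [← hψxy]
  exact φ.map_mem_stabilizerOrbit_iff ψ hφ hψ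

end Cayley

theorem restriction_is_iso_on_orbit_subgroups_general
    {G1 G2 : Type*} [Group G1] [Group G2]
    (S1 : Set G1) (S2 : Set G2)
    (hsymm1 : ∀ s ∈ S1, s⁻¹ ∈ S1) (hsymm2 : ∀ s ∈ S2, s⁻¹ ∈ S2)
    (hid1 : (1 : G1) ∉ S1) (hid2 : (1 : G2) ∉ S2)
    (φ1 φ2 : cayleyGraph S1 hsymm1 hid1 ≃g cayleyGraph S2 hsymm2 hid2)
    (hφ1e : φ1 1 = 1) (hφ2e : φ2 1 = 1)
    (g1 : G1) (g2 : G2)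
    (S1star : Set G1)
    (hS1star : S1star = {x : G1 |
      ∃ ρ : cayleyGraph S1 hsymm1 hid1 ≃g cayleyGraph S1 hsymm1 hid1,
        ρ 1 = 1 ∧ ρ g1 = x})
    (S2star : Set G2)
    (hS2star : S2star = {x : G2 |
      ∃ ρ : cayleyGraph S2 hsymm2 hid2 ≃g cayleyGraph S2 hsymm2 hid2,
        ρ 1 = 1 ∧ ρ g2 = x})
    (hg : φ1 g1 = g2) :
    Set.BijOn φ2 (Subgroup.closure S1star : Set G1)
      (Subgroup.closure S2star : Set G2) ∧
    ∀ x ∈ Subgroup.closure S1star, ∀ y ∈ Subgroup.closure S1star,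
      ((x⁻¹ * y ∈ S1star ∨ (x⁻¹ * y)⁻¹ ∈ S1star) ↔
        ((φ2 x)⁻¹ * φ2 y ∈ S2star ∨ ((φ2 x)⁻¹ * φ2 y)⁻¹ ∈ S2star)) := by
  have hS1 : S1star = (cayleyGraph S1 hsymm1 hid1).stabilizerOrbit 1 g1 := hS1star
  have hS2 : S2star = (cayleyGraph S2 hsymm2 hid2).stabilizerOrbit 1 (φ1 g1) := hg ▸ hS2star
  have hadj (x y : G1) : (φ2 x)⁻¹ * φ2 y ∈ S2star ↔ x⁻¹ * y ∈ S1star := by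
    rw [hS1, hS2]
    exact cayleyGraph.inv_mul_mem_stabilizerOrbit_iff φ1 φ2 hφ1e g1 x y
  refine ⟨Subgroup.bijOn_closure_of_inv_mul_mem_iff φ2.toEquiv hφ2e hadj,
    fun x _ y _ => ?_⟩
  simp only [mul_inv_rev, inv_inv]
  exact or_congr (hadj x y).symm (hadj y x).symm

/-- **Lemma 2.3.** Let `Sᵢ* = {ρ(gᵢ) : ρ ∈ Aut_e(Cay(Gᵢ;Sᵢ))}` and
`Gᵢ* = ⟨Sᵢ*⟩`.  If `φ₁, φ₂` are isomorphisms `Cay(G₁;S₁) → Cay(G₂;S₂)` fixing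
the identity and `φ₁(g₁) = g₂`, then `φ₂` restricts to an isomorphism from
`Cay(G₁*; S₁* ∪ (S₁*)⁻¹)` to `Cay(G₂*; S₂* ∪ (S₂*)⁻¹)`: it maps `G₁*`
bijectively onto `G₂*` and preserves adjacency. -/
theorem restriction_is_iso_on_orbit_subgroups
    {G1 G2 : Type*} [Group G1] [Group G2]
    (S1 : Set G1) (S2 : Set G2)
    (hfin1 : S1.Finite) (hfin2 : S2.Finite)
    (hsymm1 : ∀ s ∈ S1, s⁻¹ ∈ S1) (hsymm2 : ∀ s ∈ S2, s⁻¹ ∈ S2)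
    (hid1 : (1 : G1) ∉ S1) (hid2 : (1 : G2) ∉ S2)
    (hgen1 : Subgroup.closure S1 = ⊤) (hgen2 : Subgroup.closure S2 = ⊤)
    (φ1 φ2 : cayleyGraph S1 hsymm1 hid1 ≃g cayleyGraph S2 hsymm2 hid2)
    (hφ1e : φ1 1 = 1) (hφ2e : φ2 1 = 1)
    (g1 : G1) (g2 : G2)
    (S1star : Set G1)
    (hS1star : S1star = {x : G1 |
      ∃ ρ : cayleyGraph S1 hsymm1 hid1 ≃g cayleyGraph S1 hsymm1 hid1,
        ρ 1 = 1 ∧ ρ g1 = x})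
    (S2star : Set G2)
    (hS2star : S2star = {x : G2 |
      ∃ ρ : cayleyGraph S2 hsymm2 hid2 ≃g cayleyGraph S2 hsymm2 hid2,
        ρ 1 = 1 ∧ ρ g2 = x})
    (hg : φ1 g1 = g2) :
    Set.BijOn φ2 (Subgroup.closure S1star : Set G1)
      (Subgroup.closure S2star : Set G2) ∧
    ∀ x ∈ Subgroup.closure S1star, ∀ y ∈ Subgroup.closure S1star,
      ((x⁻¹ * y ∈ S1star ∨ (x⁻¹ * y)⁻¹ ∈ S1star) ↔
        ((φ2 x)⁻¹ * φ2 y ∈ S2star ∨ ((φ2 x)⁻¹ * φ2 y)⁻¹ ∈ S2star)) :=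
  restriction_is_iso_on_orbit_subgroups_general S1 S2 hsymm1 hsymm2 hid1 hid2 φ1 φ2 hφ1e hφ2e g1 g2
    S1star hS1star S2star hS2star hg
end

section
/- Let S be a finite symmetric generating set of a group G and let (g_i)_{i∈ℤ} be a convex geodesic line in Cay(G;S). If some edge of the line has label s ∈ Z(G) (i.e., g_i⁻¹ g_{i+1} = s for some i, with s central), then every edge of the line is labelled s: g_j⁻¹ g_{j+1} = s for all j ∈ ℤ. -/
namespace SimpleGraph

variable {V : Type*} {Γ : SimpleGraph V} {g : ℤ → V}

theorem adj_succ_of_dist_eq_natAbs (hgeo : ∀ i j : ℤ, Γ.dist (g i) (g j) = (i - j).natAbs)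
    (j : ℤ) : Γ.Adj (g j) (g (j + 1)) :=
  dist_eq_one_iff_adj.mp (by rw [hgeo]; simp)

theorem eq_succ_of_adj_of_adj_of_convex
    (hconv : ∀ i j : ℤ, i < j → ∀ p : Γ.Walk (g i) (g j), p.length = (j - i).toNat →
      p.support = (List.range ((j - i).toNat + 1)).map (fun k => g (i + (k : ℤ))))
    {j : ℤ} {x : V} (hx : Γ.Adj (g j) x) (hx' : Γ.Adj x (g (j + 2))) : x = g (j + 1) := by
  have hlen : (j + 2 - j).toNat = 2 := by omega
  have hsupp := hconv j (j + 2) (by omega) (.cons hx (.cons hx' .nil)) (by rw [hlen]; rfl)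
  rw [hlen] at hsupp
  have hsupp' : [g j, x, g (j + 2)] =
      [g (j + ((0 : ℕ) : ℤ)), g (j + ((1 : ℕ) : ℤ)), g (j + ((2 : ℕ) : ℤ))] := hsupp
  simp only [List.cons.injEq] at hsupp'
  exact hsupp'.2.1.trans (by norm_num)

end SimpleGraph

def edgeLabel {G : Type*} [Group G] (g : ℤ → G) (j : ℤ) : G := (g j)⁻¹ * g (j + 1)

theorem cayleyGraph_adj_mul_iff {G : Type*} [Group G] {S : Set G}
    {hsymm : ∀ t ∈ S, t⁻¹ ∈ S} {hid : (1 : G) ∉ S} {x t : G} :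
    (cayleyGraph S hsymm hid).Adj x (x * t) ↔ t ∈ S := by
  rw [show (cayleyGraph S hsymm hid).Adj x (x * t) ↔ x⁻¹ * (x * t) ∈ S from Iff.rfl,
    inv_mul_cancel_left]

theorem cayleyGraph_edgeLabel_eq_of_commute {G : Type*} [Group G] {S : Set G}
    {hsymm : ∀ t ∈ S, t⁻¹ ∈ S} {hid : (1 : G) ∉ S} {g : ℤ → G}
    (hlabel : ∀ j, edgeLabel g j ∈ S)
    (hconv : ∀ i j : ℤ, i < j → ∀ p : (cayleyGraph S hsymm hid).Walk (g i) (g j),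
      p.length = (j - i).toNat →
      p.support = (List.range ((j - i).toNat + 1)).map (fun k => g (i + (k : ℤ))))
    {j : ℤ} (hcomm : Commute (edgeLabel g j) (edgeLabel g (j + 1))) :
    edgeLabel g j = edgeLabel g (j + 1) := by
  have hsucc : ∀ k, g (k + 1) = g k * edgeLabel g k := fun k ↦ by simp [edgeLabel]
  have hend : g (j + 2) = g j * edgeLabel g (j + 1) * edgeLabel g j := by
    rw [mul_assoc, ← hcomm.eq, ← mul_assoc, ← hsucc, ← hsucc, add_assoc, one_add_one_eq_two]
  have hmid : g j * edgeLabel g (j + 1) = g (j + 1) := by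
    refine SimpleGraph.eq_succ_of_adj_of_adj_of_convex hconv ?_ ?_
    · exact cayleyGraph_adj_mul_iff.mpr (hlabel (j + 1))
    · exact hend ▸ cayleyGraph_adj_mul_iff.mpr (hlabel j)
  exact mul_left_cancel (hmid.trans (hsucc j)).symm

theorem central_label_propagates_on_convex_geodesic_general
    {G : Type*} [Group G]
    (S : Set G)
    (hsymm : ∀ t ∈ S, t⁻¹ ∈ S) (hid : (1 : G) ∉ S)
    (g : ℤ → G)
    -- `(g i)` is a geodesic line:
    (hgeo : ∀ i j : ℤ, (cayleyGraph S hsymm hid).dist (g i) (g j) = (i - j).natAbs)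
    -- the geodesic line is convex: the canonical path is the unique one of its length
    (hconv : ∀ i j : ℤ, i < j →
      ∀ p : (cayleyGraph S hsymm hid).Walk (g i) (g j),
        p.length = (j - i).toNat →
        p.support = (List.range ((j - i).toNat + 1)).map (fun k => g (i + (k : ℤ))))
    (s : G) (hcentral : s ∈ Subgroup.center G)
    (i0 : ℤ) (hi0 : (g i0)⁻¹ * g (i0 + 1) = s) :
    ∀ j : ℤ, (g j)⁻¹ * g (j + 1) = s := by
  have hlabel : ∀ j, edgeLabel g j ∈ S := SimpleGraph.adj_succ_of_dist_eq_natAbs hgeo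
  have hcomm : ∀ j k, edgeLabel g j = s → Commute (edgeLabel g j) (edgeLabel g k) :=
    fun j k hj ↦ hj ▸ (Subgroup.mem_center_iff.mp hcentral _).symm
  intro j
  induction j using Int.inductionOn' with
  | b => exact i0
  | zero => exact hi0
  | succ k _ ih =>
    exact (cayleyGraph_edgeLabel_eq_of_commute hlabel hconv (hcomm k _ ih)).symm.trans ih
  | pred k _ ih =>
    have h := cayleyGraph_edgeLabel_eq_of_commute hlabel hconv (j := k - 1)
    rw [sub_add_cancel] at h
    exact (h (hcomm k _ ih).symm).trans ih

/-- **Lemma 2.4 (Löh).** If some edge of a convex geodesic line in `Cay(G;S)`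
is labelled by a central element `s ∈ S`, then every edge of the line is
labelled `s`. -/
theorem central_label_propagates_on_convex_geodesic
    {G : Type*} [Group G]
    (S : Set G) (hfin : S.Finite)
    (hsymm : ∀ t ∈ S, t⁻¹ ∈ S) (hid : (1 : G) ∉ S)
    (hgen : Subgroup.closure S = ⊤)
    (g : ℤ → G)
    -- `(g i)` is a geodesic line:
    (hgeo : ∀ i j : ℤ, (cayleyGraph S hsymm hid).dist (g i) (g j) = (i - j).natAbs)
    -- the geodesic line is convex: the canonical path is the unique one of its length
    (hconv : ∀ i j : ℤ, i < j →
      ∀ p : (cayleyGraph S hsymm hid).Walk (g i) (g j),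
        p.length = (j - i).toNat →
        p.support = (List.range ((j - i).toNat + 1)).map (fun k => g (i + (k : ℤ))))
    (s : G) (hsS : s ∈ S) (hcentral : s ∈ Subgroup.center G)
    (i0 : ℤ) (hi0 : (g i0)⁻¹ * g (i0 + 1) = s) :
    ∀ j : ℤ, (g j)⁻¹ * g (j + 1) = s :=
  central_label_propagates_on_convex_geodesic_general S hsymm hid g hgeo hconv s hcentral i0 hi0
end

section
/- Let G be a finitely generated, torsion-free, nilpotent group. If an element g ∈ G has only finitely many conjugates in G, then g lies in the center Z(G). Consequently, the elements of Z(G) are exactly the elements of G with finitely many conjugates. -/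
/-!
In a torsion-free nilpotent group, if `xⁿ` commutes with `g` for some `n > 0`, then so does
`x`. Indeed, if `⁅x, g⁆` lies in `ζᵢ₊₁` then it is central modulo `ζᵢ`, so
`⁅x, g⁆ⁿ ≡ ⁅xⁿ, g⁆ = 1` modulo `ζᵢ`; and since the quotients `ζᵢ₊₁ / ζᵢ` of the upper central
series of a torsion-free group are torsion-free, `⁅x, g⁆ ∈ ζᵢ`. Descending the series gives
`⁅x, g⁆ = 1`. If `g` has finitely many conjugates, its centralizer has finite index, so it
contains a positive power of every element, and therefore every element.
-/

open Subgroup commutatorElement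

section UpperCentralSeries

variable {G : Type*} [Group G]

theorem commutatorElement_pow_left_of_mem_center {a b : G} (h : ⁅a, b⁆ ∈ center G) (n : ℕ) :
    ⁅a ^ n, b⁆ = ⁅a, b⁆ ^ n := by
  induction n with
  | zero => simp
  | succ n ih =>
    calc ⁅a ^ (n + 1), b⁆ = a * ⁅a ^ n, b⁆ * a⁻¹ * ⁅a, b⁆ := by
          simp only [commutatorElement_def]; group
      _ = ⁅a, b⁆ ^ n * ⁅a, b⁆ := by
          rw [ih, mem_center_iff.1 (pow_mem h n) a, mul_inv_cancel_right]
      _ = ⁅a, b⁆ ^ (n + 1) := (pow_succ _ n).symm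

theorem commutatorElement_pow_mem_upperCentralSeries_iff {a b : G} {i : ℕ}
    (h : ⁅a, b⁆ ∈ Subgroup.upperCentralSeries G (i + 1)) (n : ℕ) :
    ⁅a, b⁆ ^ n ∈ Subgroup.upperCentralSeries G i ↔
      ⁅a ^ n, b⁆ ∈ Subgroup.upperCentralSeries G i := by
  set N := Subgroup.upperCentralSeries G i
  have hc : QuotientGroup.mk' N ⁅a, b⁆ ∈ center (G ⧸ N) :=
    mem_comap.1 (Subgroup.upperCentralSeriesStep_eq_comap_center N ▸ h)
  rw [map_commutatorElement] at hc
  rw [← QuotientGroup.ker_mk' N, MonoidHom.mem_ker, MonoidHom.mem_ker, map_pow,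
    map_commutatorElement, map_commutatorElement, map_pow,
    commutatorElement_pow_left_of_mem_center hc]

theorem mem_upperCentralSeries_of_pow_mem (htf : ∀ g : G, g ≠ 1 → ¬IsOfFinOrder g) {n : ℕ}
    (hn : 0 < n) {i : ℕ} {u : G} (hu : u ∈ Subgroup.upperCentralSeries G (i + 1))
    (hun : u ^ n ∈ Subgroup.upperCentralSeries G i) : u ∈ Subgroup.upperCentralSeries G i := by
  induction i generalizing u with
  | zero =>
    rw [Subgroup.upperCentralSeries_zero, mem_bot] at hun ⊢
    by_contra hne
    exact htf u hne (isOfFinOrder_iff_pow_eq_one.2 ⟨n, hn, hun⟩)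
  | succ i ih =>
    refine Subgroup.mem_upperCentralSeries_succ_iff.2 fun y => ih (hu y) ?_
    exact (commutatorElement_pow_mem_upperCentralSeries_iff (hu y) n).2 (hun y)

theorem Commute.of_pow_left_of_isNilpotent [Group.IsNilpotent G]
    (htf : ∀ g : G, g ≠ 1 → ¬IsOfFinOrder g) {x y : G} {n : ℕ} (hn : 0 < n)
    (h : Commute (x ^ n) y) : Commute x y := by
  have hcomm : ∀ i, ⁅x ^ n, y⁆ ∈ Subgroup.upperCentralSeries G i := fun i => by
    rw [commutatorElement_eq_one_iff_commute.2 h]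
    exact one_mem _
  have descend : ∀ i, ⁅x, y⁆ ∈ Subgroup.upperCentralSeries G i →
      ⁅x, y⁆ ∈ Subgroup.upperCentralSeries G 0 := by
    intro i
    induction i with
    | zero => exact id
    | succ i ih =>
      exact fun hi => ih <| mem_upperCentralSeries_of_pow_mem htf hn hi
        ((commutatorElement_pow_mem_upperCentralSeries_iff hi n).2 (hcomm i))
  obtain ⟨c, hc⟩ := Group.IsNilpotent.nilpotent G
  have h0 := descend c (hc ▸ mem_top _)
  rwa [Subgroup.upperCentralSeries_zero, mem_bot, commutatorElement_eq_one_iff_commute] at h0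

end UpperCentralSeries

theorem exists_pow_commute_of_finite_conjugates {G : Type*} [Group G] {g : G}
    (hfin : {h : G | ∃ x : G, x⁻¹ * g * x = h}.Finite) (y : G) :
    ∃ n, 0 < n ∧ Commute (y ^ n) g := by
  have horbit : (MulAction.orbit (ConjAct G) g).Finite := hfin.subset <| by
    rintro _ ⟨c, rfl⟩
    exact ⟨(ConjAct.ofConjAct c)⁻¹, by rw [inv_inv, ← ConjAct.smul_def]⟩
  have hindex : (MulAction.stabilizer (ConjAct G) g).index ≠ 0 := by
    rw [MulAction.index_stabilizer]
    exact Set.ncard_ne_zero_of_mem (MulAction.mem_orbit_self g) horbit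
  obtain ⟨n, hn, -, hyn⟩ := exists_pow_mem_of_index_ne_zero hindex (ConjAct.toConjAct y)
  refine ⟨n, hn, ?_⟩
  rw [MulAction.mem_stabilizer_iff, ← map_pow, ConjAct.toConjAct_smul] at hyn
  exact mul_inv_eq_iff_eq_mul.1 hyn

theorem finite_conjugates_iff_central_general
    {G : Type*} [Group G] [Group.IsNilpotent G]
    (htf : ∀ g : G, g ≠ 1 → ¬IsOfFinOrder g) (g : G) :
    ({h : G | ∃ x : G, x⁻¹ * g * x = h}).Finite ↔ g ∈ Subgroup.center G := by
  constructor
  · intro hfin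
    refine mem_center_iff.2 fun y => ?_
    obtain ⟨n, hn, hyn⟩ := exists_pow_commute_of_finite_conjugates hfin y
    exact (hyn.of_pow_left_of_isNilpotent htf hn).eq
  · intro hg
    refine (Set.finite_singleton g).subset ?_
    rintro _ ⟨x, rfl⟩
    rw [Set.mem_singleton_iff, mul_assoc, ← mem_center_iff.1 hg x, inv_mul_cancel_left]

/-- **Lemma 2.7(9).** In a finitely generated, torsion-free, nilpotent group,
the elements of the center are exactly the elements with only finitely many
conjugates. -/
theorem finite_conjugates_iff_central
    {G : Type*} [Group G] [Group.FG G] [Group.IsNilpotent G]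
    (htf : ∀ g : G, g ≠ 1 → ¬IsOfFinOrder g) (g : G) :
    ({h : G | ∃ x : G, x⁻¹ * g * x = h}).Finite ↔ g ∈ Subgroup.center G :=
  finite_conjugates_iff_central_general htf g
end

section
/- Let G be an infinite group, let F be a nontrivial finite subgroup of G, and let S be a finite symmetric generating set of G. Then FSF = { f s f' : f, f' ∈ F, s ∈ S } is a finite symmetric generating set of G, and the connected Cayley graph Cay(G; FSF) is not normal: it admits a graph automorphism fixing the identity that is not a group automorphism (hence not an affine bijection). -/
/-- The Cayley graph of a group `G` with respect to a set `T`: for symmetric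
`T`, `g` is adjacent to `h` iff `g ≠ h` and `g⁻¹ * h ∈ T`. -/
def cayleyGraph' {G : Type*} [Group G] (T : Set G) : SimpleGraph G :=
  SimpleGraph.fromRel (fun g h => g⁻¹ * h ∈ T)

/-- **Proposition 5.1.** If `F` is a nontrivial finite subgroup of an infinite
group `G` and `S` is a finite symmetric generating set of `G`, then `FSF` is a
finite symmetric generating set and the connected Cayley graph `Cay(G; FSF)`
is not normal: it has a graph automorphism fixing the identity that is not a
group automorphism, hence not an affine bijection. -/
theorem cayley_FSF_not_normal
    {G : Type*} [Group G] [Infinite G]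
    (F : Subgroup G) (hFfin : (F : Set G).Finite) (hFnontriv : F ≠ ⊥)
    (S : Set G) (hfin : S.Finite)
    (hsymm : ∀ s ∈ S, s⁻¹ ∈ S) (hid : (1 : G) ∉ S)
    (hgen : Subgroup.closure S = ⊤)
    (T : Set G)
    (hT : T = {x : G | ∃ f ∈ F, ∃ s ∈ S, ∃ f' ∈ F, x = f * s * f'}) :
    T.Finite ∧ (∀ t ∈ T, t⁻¹ ∈ T) ∧ Subgroup.closure T = ⊤ ∧
    ∃ ψ : cayleyGraph' T ≃g cayleyGraph' T,
      ψ 1 = 1 ∧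
      (¬ ∃ α : G ≃* G, ∀ x : G, ψ x = α x) ∧
      (¬ ∃ (α : G ≃* G) (h : G), ∀ x : G, ψ x = h * α x) := by
  classical
  -- a nontrivial element of F
  obtain ⟨⟨f, hfF⟩, hf1'⟩ := (Subgroup.ne_bot_iff_exists_ne_one).1 hFnontriv
  have hf1 : f ≠ 1 := by simpa [Subgroup.mk_eq_one] using hf1'
  -- an element outside F
  obtain ⟨x₀, hx₀⟩ := hFfin.infinite_compl.nonempty
  have hx₀F : x₀ ∉ F := hx₀
  -- T is finite
  have hTfin : T.Finite := by
    have : T ⊆ (fun p : G × G × G => p.1 * p.2.1 * p.2.2) ''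
        ((F : Set G) ×ˢ S ×ˢ (F : Set G)) := by
      intro x hx
      rw [hT] at hx
      obtain ⟨a, ha, s, hs, b, hb, rfl⟩ := hx
      exact ⟨⟨a, s, b⟩, ⟨ha, hs, hb⟩, rfl⟩
    exact (((hFfin.prod (hfin.prod hFfin))).image _).subset this
  -- T is symmetric
  have hTsymm : ∀ t ∈ T, t⁻¹ ∈ T := by
    intro t ht
    rw [hT] at ht ⊢
    obtain ⟨a, ha, s, hs, b, hb, rfl⟩ := ht
    exact ⟨b⁻¹, inv_mem hb, s⁻¹, hsymm s hs, a⁻¹, inv_mem ha, by group⟩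
  -- T generates
  have hTgen : Subgroup.closure T = ⊤ := by
    have hST : S ⊆ T := by
      intro s hs
      rw [hT]
      exact ⟨1, one_mem _, s, hs, 1, one_mem _, by group⟩
    exact top_le_iff.1 (hgen ▸ Subgroup.closure_mono hST)
  -- T is F-bi-invariant
  have hbi : ∀ a ∈ F, ∀ b ∈ F, ∀ g : G, a * g * b ∈ T ↔ g ∈ T := by
    have h1 : ∀ a ∈ F, ∀ b ∈ F, ∀ g ∈ T, a * g * b ∈ T := by
      intro a ha b hb g hg
      rw [hT] at hg ⊢
      obtain ⟨a', ha', s, hs, b', hb', rfl⟩ := hg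
      exact ⟨a * a', mul_mem ha ha', s, hs, b' * b, mul_mem hb' hb, by group⟩
    intro a ha b hb g
    constructor
    · intro h
      have h2 := h1 a⁻¹ (inv_mem ha) b⁻¹ (inv_mem hb) _ h
      have : a⁻¹ * (a * g * b) * b⁻¹ = g := by group
      rwa [this] at h2
    · exact h1 a ha b hb g
  -- the swap
  set ψ0 : Equiv.Perm G := Equiv.swap x₀ (x₀ * f) with hψ0
  have hx₀ne : x₀ ≠ x₀ * f := by
    intro h
    exact hf1 (by simpa using (mul_left_cancel (a := x₀) (by simpa using h.symm)))
  -- ψ0 preserves left F-cosets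
  have hcoset : ∀ x : G, ∃ c ∈ F, ψ0 x = x * c := by
    intro x
    rcases eq_or_ne x x₀ with rfl | h1
    · exact ⟨f, hfF, by simp [hψ0]⟩
    rcases eq_or_ne x (x₀ * f) with rfl | h2
    · exact ⟨f⁻¹, inv_mem hfF, by simp [hψ0, Equiv.swap_apply_right, mul_assoc]⟩
    · exact ⟨1, one_mem _, by simp [hψ0, Equiv.swap_apply_of_ne_of_ne h1 h2]⟩
  -- ψ0 is a graph automorphism
  have key : ∀ a b : G, (ψ0 a)⁻¹ * ψ0 b ∈ T ↔ a⁻¹ * b ∈ T := by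
    intro a b
    obtain ⟨c₁, hc₁, h₁⟩ := hcoset a
    obtain ⟨c₂, hc₂, h₂⟩ := hcoset b
    rw [h₁, h₂]
    have : (a * c₁)⁻¹ * (b * c₂) = c₁⁻¹ * (a⁻¹ * b) * c₂ := by group
    rw [this]
    exact hbi c₁⁻¹ (inv_mem hc₁) c₂ hc₂ _
  have hadj : ∀ a b : G,
      (cayleyGraph' T).Adj (ψ0 a) (ψ0 b) ↔ (cayleyGraph' T).Adj a b := by
    intro a b
    simp only [cayleyGraph', SimpleGraph.fromRel_adj]
    rw [key, key, ne_eq, Equiv.apply_eq_iff_eq]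
  refine ⟨hTfin, hTsymm, hTgen, ⟨⟨ψ0, fun {a b} => hadj a b⟩, ?_, ?_, ?_⟩⟩
  · -- fixes 1
    show ψ0 1 = 1
    have h1 : (1 : G) ≠ x₀ := fun h => hx₀F (h ▸ one_mem F)
    have h2 : (1 : G) ≠ x₀ * f := by
      intro h
      have : x₀ = f⁻¹ := by
        rw [eq_inv_iff_mul_eq_one]; exact h.symm
      exact hx₀F (this ▸ inv_mem hfF)
    simp [hψ0, Equiv.swap_apply_of_ne_of_ne h1 h2]
  · -- not a group automorphism
    rintro ⟨α, hall⟩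
    have hall' : ∀ x : G, ψ0 x = α x := hall
    -- pick y avoiding finitely many elements
    obtain ⟨y, hy⟩ := (((Set.finite_singleton (x₀ * f)).insert x₀).insert f⁻¹
      |>.insert (1 : G)).infinite_compl.nonempty
    simp only [Set.mem_compl_iff, Set.mem_insert_iff, Set.mem_singleton_iff, not_or] at hy
    obtain ⟨hy1, hyf, hyx, hyxf⟩ := hy
    have hψy : ψ0 y = y := Equiv.swap_apply_of_ne_of_ne hyx hyxf
    have hz1 : x₀ * y⁻¹ ≠ x₀ := by
      intro h
      exact hy1 (by simpa using (mul_left_cancel (a := x₀) (by simpa using h)).symm)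
    have hz2 : x₀ * y⁻¹ ≠ x₀ * f := by
      intro h
      have : y⁻¹ = f := mul_left_cancel h
      exact hyf (by rw [← this, inv_inv])
    have hψz : ψ0 (x₀ * y⁻¹) = x₀ * y⁻¹ := Equiv.swap_apply_of_ne_of_ne hz1 hz2
    have hαx₀ : α x₀ = x₀ := by
      have : α x₀ = α (x₀ * y⁻¹) * α y := by rw [← map_mul]; group
      rw [this, ← hall', ← hall', hψy, hψz]; group
    have : ψ0 x₀ = x₀ := by rw [hall', hαx₀]
    rw [hψ0, Equiv.swap_apply_left] at this
    exact hx₀ne this.symm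
  · -- not an affine bijection
    rintro ⟨α, h, hall⟩
    have h1 : (1 : G) ≠ x₀ := fun h => hx₀F (h ▸ one_mem F)
    have h2 : (1 : G) ≠ x₀ * f := by
      intro h
      have : x₀ = f⁻¹ := by rw [eq_inv_iff_mul_eq_one]; exact h.symm
      exact hx₀F (this ▸ inv_mem hfF)
    have hψ1 : ψ0 1 = 1 := Equiv.swap_apply_of_ne_of_ne h1 h2
    have hall0 : ∀ x : G, ψ0 x = h * α x := hall
    have hh : h = 1 := by
      have := hall0 1
      rw [hψ1, map_one, mul_one] at this
      exact this.symm
    -- reduce to the previous case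
    obtain ⟨y, hy⟩ := (((Set.finite_singleton (x₀ * f)).insert x₀).insert f⁻¹
      |>.insert (1 : G)).infinite_compl.nonempty
    simp only [Set.mem_compl_iff, Set.mem_insert_iff, Set.mem_singleton_iff, not_or] at hy
    obtain ⟨hy1, hyf, hyx, hyxf⟩ := hy
    have hall' : ∀ x : G, ψ0 x = α x := by
      intro x
      have := hall0 x
      rwa [hh, one_mul] at this
    have hψy : ψ0 y = y := Equiv.swap_apply_of_ne_of_ne hyx hyxf
    have hz1 : x₀ * y⁻¹ ≠ x₀ := by
      intro h
      exact hy1 (by simpa using (mul_left_cancel (a := x₀) (by simpa using h)).symm)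
    have hz2 : x₀ * y⁻¹ ≠ x₀ * f := by
      intro h
      have : y⁻¹ = f := mul_left_cancel h
      exact hyf (by rw [← this, inv_inv])
    have hψz : ψ0 (x₀ * y⁻¹) = x₀ * y⁻¹ := Equiv.swap_apply_of_ne_of_ne hz1 hz2
    have hαx₀ : α x₀ = x₀ := by
      have : α x₀ = α (x₀ * y⁻¹) * α y := by rw [← map_mul]; group
      rw [this, ← hall', ← hall', hψy, hψz]; group
    have : ψ0 x₀ = x₀ := by rw [hall', hαx₀]
    rw [hψ0, Equiv.swap_apply_left] at this
    exact hx₀ne this.symm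
end
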